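/- Let κ ∈ (0,1), set λ² = 1 − κ², and let φ : ℝ → ℝ be twice differentiable with φ(0) = 0 and (deriv φ u) · F(1/3, 2/3; 1/2; κ² sin²(φ u)) = 1 for all real u. Then, writing d = deriv φ and d' = deriv (deriv φ), for all real u: (d' u)² = (4/9) · (1 − d u) · ((d u)³ + 3 (d u)² − 4λ²). -/

import Mathlib

open Real

/-- The Gauss hypergeometric series `F(a,b;c;x) = ∑ (a)_n (b)_n / ((c)_n n!) xⁿ`. -/
noncomputable def hyperF (a b c x : ℝ) : ℝ :=
  ∑' n : ℕ, ((ascPochhammer ℝ n).eval a * (ascPochhammer ℝ n).eval b /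
    ((ascPochhammer ℝ n).eval c * (n.factorial : ℝ))) * x ^ n


noncomputable def hc (n : ℕ) : ℝ :=
  (ascPochhammer ℝ n).eval (1/3 : ℝ) * (ascPochhammer ℝ n).eval (2/3 : ℝ) /
    ((ascPochhammer ℝ n).eval (1/2 : ℝ) * (n.factorial : ℝ))

lemma ascPoch_pos {x : ℝ} (hx : 0 < x) (n : ℕ) : 0 < (ascPochhammer ℝ n).eval x := by
  induction n with
  | zero => simp [ascPochhammer_zero]
  | succ n ih =>
    rw [ascPochhammer_succ_eval]
    have : (0:ℝ) < x + n := by positivity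
    exact mul_pos ih this

lemma hc_pos (n : ℕ) : 0 < hc n := by
  apply div_pos (mul_pos (ascPoch_pos (by norm_num) n) (ascPoch_pos (by norm_num) n))
  exact mul_pos (ascPoch_pos (by norm_num) n) (by positivity)

lemma hc_zero : hc 0 = 1 := by simp [hc, ascPochhammer_zero]

lemma hc_rec (n : ℕ) :
    hc (n+1) * (((n:ℝ)+1/2) * ((n:ℝ)+1)) = hc n * (((n:ℝ)+1/3) * ((n:ℝ)+2/3)) := by
  have h1 : (ascPochhammer ℝ (n+1)).eval (1/3 : ℝ)
      = (ascPochhammer ℝ n).eval (1/3 : ℝ) * (1/3 + n) := ascPochhammer_succ_eval n _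
  have h2 : (ascPochhammer ℝ (n+1)).eval (2/3 : ℝ)
      = (ascPochhammer ℝ n).eval (2/3 : ℝ) * (2/3 + n) := ascPochhammer_succ_eval n _
  have h3 : (ascPochhammer ℝ (n+1)).eval (1/2 : ℝ)
      = (ascPochhammer ℝ n).eval (1/2 : ℝ) * (1/2 + n) := ascPochhammer_succ_eval n _
  have hfac : ((n+1).factorial : ℝ) = (n.factorial : ℝ) * (n+1) := by
    rw [Nat.factorial_succ]; push_cast; ring
  have hden : (ascPochhammer ℝ n).eval (1/2 : ℝ) * (n.factorial : ℝ) ≠ 0 := by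
    have := ascPoch_pos (x := (1/2:ℝ)) (by norm_num) n
    positivity
  have hd2 : ((1:ℝ)/2 + n) ≠ 0 := by positivity
  have hd3 : ((n:ℝ)+1) ≠ 0 := by positivity
  have hC : (0:ℝ) < (ascPochhammer ℝ n).eval (1/2 : ℝ) := ascPoch_pos (by norm_num) n
  have hF : (0:ℝ) < (n.factorial : ℝ) := by positivity
  unfold hc
  rw [h1, h2, h3, hfac]
  rw [div_mul_eq_mul_div, div_mul_eq_mul_div, div_eq_div_iff]
  · ring
  · exact ne_of_gt (by positivity)
  · exact ne_of_gt (mul_pos hC hF)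

lemma hc_succ_le (n : ℕ) : hc (n+1) ≤ hc n := by
  have h := hc_rec n
  have hp := hc_pos n
  have hq := hc_pos (n+1)
  have hx : (0:ℝ) ≤ (n:ℝ) := Nat.cast_nonneg n
  have hpos : (0:ℝ) < ((n:ℝ)+1/2) * ((n:ℝ)+1) := by positivity
  have key : hc (n+1) * (((n:ℝ)+1/2) * ((n:ℝ)+1)) ≤ hc n * (((n:ℝ)+1/2) * ((n:ℝ)+1)) := by
    nlinarith
  exact le_of_mul_le_mul_right key hpos

lemma hc_le_one (n : ℕ) : hc n ≤ 1 := by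
  induction n with
  | zero => simp [hc_zero]
  | succ n ih => exact le_trans (hc_succ_le n) ih

section B
variable {x : ℝ}

lemma summable_quad_geom (hx : |x| < 1) :
    Summable (fun n : ℕ => (((n:ℝ)+2)^2) * |x| ^ n) := by
  have hx' : ‖|x|‖ < 1 := by simpa using hx
  have h2 := summable_pow_mul_geometric_of_norm_lt_one (R := ℝ) 2 hx'
  have h1 := summable_pow_mul_geometric_of_norm_lt_one (R := ℝ) 1 hx'
  have h0 := summable_pow_mul_geometric_of_norm_lt_one (R := ℝ) 0 hx'
  have := (h2.add (h1.mul_left 4)).add (h0.mul_left 4)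
  refine this.congr fun n => ?_
  ring

lemma summable_aux (hx : |x| < 1) {f : ℕ → ℝ} (hf : ∀ n, |f n| ≤ ((n:ℝ)+2)^2) :
    Summable (fun n => f n * x ^ n) := by
  refine Summable.of_norm_bounded (summable_quad_geom hx) fun n => ?_
  rw [Real.norm_eq_abs, abs_mul, abs_pow]
  exact mul_le_mul_of_nonneg_right (hf n) (by positivity)

end B

noncomputable def HH (x : ℝ) : ℝ := ∑' n : ℕ, hc n * x ^ n
noncomputable def HH1 (x : ℝ) : ℝ := ∑' n : ℕ, ((n:ℝ)+1) * hc (n+1) * x ^ n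
noncomputable def HH2 (x : ℝ) : ℝ := ∑' n : ℕ, ((n:ℝ)+2) * ((n:ℝ)+1) * hc (n+2) * x ^ n

section C
variable {x : ℝ}

lemma hasSum_HH (hx : |x| < 1) : HasSum (fun n : ℕ => hc n * x ^ n) (HH x) := by
  refine (summable_aux hx fun n => ?_).hasSum
  have := hc_pos n; have := hc_le_one n
  rw [abs_of_pos ‹0 < hc n›]
  nlinarith [Nat.cast_nonneg (α := ℝ) n]

lemma hasSum_HH1 (hx : |x| < 1) :
    HasSum (fun n : ℕ => ((n:ℝ)+1) * hc (n+1) * x ^ n) (HH1 x) := by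
  refine (summable_aux hx fun n => ?_).hasSum
  have h1 := hc_pos (n+1); have h2 := hc_le_one (n+1)
  have hn : (0:ℝ) ≤ (n:ℝ) := Nat.cast_nonneg n
  rw [abs_of_pos (by positivity)]
  nlinarith

lemma hasSum_HH2 (hx : |x| < 1) :
    HasSum (fun n : ℕ => ((n:ℝ)+2) * ((n:ℝ)+1) * hc (n+2) * x ^ n) (HH2 x) := by
  refine (summable_aux hx fun n => ?_).hasSum
  have h1 := hc_pos (n+2); have h2 := hc_le_one (n+2)
  have hn : (0:ℝ) ≤ (n:ℝ) := Nat.cast_nonneg n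
  rw [abs_of_pos (by positivity)]
  nlinarith

lemma hasSum_shift {f : ℕ → ℝ} {a : ℝ} (h0 : f 0 = 0)
    (h : HasSum (fun n => f (n + 1)) a) : HasSum f a := by
  have := (hasSum_nat_add_iff (f := f) 1).mp h
  simpa [h0] using this

end C

section D
variable {x : ℝ}

lemma hasDerivAt_HH (hx : |x| < 1) : HasDerivAt HH (HH1 x) x := by
  set ρ : ℝ := (|x| + 1)/2 with hρdef
  have hax : 0 ≤ |x| := abs_nonneg x
  have hρ0 : 0 < ρ := by positivity
  have hρ1 : ρ < 1 := by rw [hρdef]; linarith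
  have hxρ : |x| < ρ := by rw [hρdef]; linarith
  have hρa : |ρ| < 1 := by rwa [abs_of_pos hρ0]
  have husum : Summable (fun n : ℕ => (n:ℝ) * ρ^(n-1)) := by
    rw [← summable_nat_add_iff 1]
    refine Summable.of_norm_bounded (summable_quad_geom hρa) fun n => ?_
    have h1 : ((n:ℝ)+1) ≤ ((n:ℝ)+2)^2 := by nlinarith [Nat.cast_nonneg (α := ℝ) n]
    have h2 : (0:ℝ) ≤ ρ ^ n := by positivity
    simp only [Nat.add_sub_cancel, Real.norm_eq_abs, abs_mul, abs_pow, abs_of_pos hρ0,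
      Nat.cast_add, Nat.cast_one, abs_of_nonneg (by positivity : (0:ℝ) ≤ (n:ℝ)+1)]
    exact mul_le_mul_of_nonneg_right h1 h2
  have key := hasDerivAt_tsum_of_isPreconnected (𝕜 := ℝ) (F := ℝ) husum
    (isOpen_Ioo (a := -ρ) (b := ρ)) isPreconnected_Ioo
    (g := fun (n : ℕ) (y : ℝ) => hc n * y ^ n)
    (g' := fun (n : ℕ) (y : ℝ) => hc n * ((n:ℝ) * y ^ (n-1)))
    (fun n y _ => (hasDerivAt_pow n y).const_mul (hc n))
    (fun n y hy => by
      have hyρ : |y| ≤ ρ := by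
        rw [abs_le]; exact ⟨hy.1.le, hy.2.le⟩
      have hb : |y| ^ (n-1) ≤ ρ ^ (n-1) := pow_le_pow_left₀ (abs_nonneg y) hyρ _
      have hcn : |hc n| ≤ 1 := by
        rw [abs_of_pos (hc_pos n)]; exact hc_le_one n
      calc ‖hc n * ((n:ℝ) * y ^ (n-1))‖ = |hc n| * ((n:ℝ) * |y| ^ (n-1)) := by
            rw [Real.norm_eq_abs, abs_mul, abs_mul, abs_pow, Nat.abs_cast]
        _ ≤ 1 * ((n:ℝ) * ρ ^ (n-1)) := by
            refine mul_le_mul hcn (mul_le_mul_of_nonneg_left hb (Nat.cast_nonneg n)) ?_ one_pos.le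
            positivity
        _ = (n:ℝ) * ρ ^ (n-1) := one_mul _
      )
    (y₀ := 0) (by constructor <;> [linarith; exact hρ0])
    (by
      refine (summable_aux (x := (0:ℝ)) (by norm_num) fun n => ?_)
      have := hc_pos n; have := hc_le_one n
      rw [abs_of_pos ‹0 < hc n›]
      nlinarith [Nat.cast_nonneg (α := ℝ) n])
    (y := x) (by rwa [Set.mem_Ioo, ← abs_lt])
  have e : (fun n : ℕ => hc (n+1) * ((↑(n+1):ℝ) * x ^ ((n+1)-1)))
      = fun n : ℕ => ((n:ℝ)+1) * hc (n+1) * x ^ n := by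
    funext n; push_cast [Nat.add_sub_cancel]; ring
  have hshift : HasSum (fun n : ℕ => hc n * ((n:ℝ) * x ^ (n-1))) (HH1 x) :=
    hasSum_shift (by simp) (e ▸ hasSum_HH1 hx)
  have : (∑' n : ℕ, hc n * ((n:ℝ) * x ^ (n-1))) = HH1 x := hshift.tsum_eq
  rw [this] at key
  exact key

lemma hasDerivAt_HH1 (hx : |x| < 1) : HasDerivAt HH1 (HH2 x) x := by
  set ρ : ℝ := (|x| + 1)/2 with hρdef
  have hax : 0 ≤ |x| := abs_nonneg x
  have hρ0 : 0 < ρ := by positivity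
  have hρ1 : ρ < 1 := by rw [hρdef]; linarith
  have hxρ : |x| < ρ := by rw [hρdef]; linarith
  have hρa : |ρ| < 1 := by rwa [abs_of_pos hρ0]
  have husum : Summable (fun n : ℕ => ((n:ℝ)+1) * ((n:ℝ) * ρ^(n-1))) := by
    rw [← summable_nat_add_iff 1]
    refine Summable.of_norm_bounded (summable_quad_geom hρa) fun n => ?_
    have h1 : ((n:ℝ)+2) * ((n:ℝ)+1) ≤ ((n:ℝ)+2)^2 := by nlinarith [Nat.cast_nonneg (α := ℝ) n]
    have h2 : (0:ℝ) ≤ ρ ^ n := by positivity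
    simp only [Nat.add_sub_cancel, Real.norm_eq_abs, Nat.cast_add, Nat.cast_one]
    rw [abs_of_nonneg (by positivity)]
    calc ((n:ℝ)+1+1) * (((n:ℝ)+1) * ρ ^ n) = (((n:ℝ)+2) * ((n:ℝ)+1)) * ρ ^ n := by ring
      _ ≤ ((n:ℝ)+2)^2 * ρ ^n := mul_le_mul_of_nonneg_right h1 h2
      _ = ((n:ℝ)+2)^2 * |ρ| ^n := by rw [abs_of_pos hρ0]
  have key := hasDerivAt_tsum_of_isPreconnected (𝕜 := ℝ) (F := ℝ) husum
    (isOpen_Ioo (a := -ρ) (b := ρ)) isPreconnected_Ioo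
    (g := fun (n : ℕ) (y : ℝ) => ((n:ℝ)+1) * hc (n+1) * y ^ n)
    (g' := fun (n : ℕ) (y : ℝ) => ((n:ℝ)+1) * hc (n+1) * ((n:ℝ) * y ^ (n-1)))
    (fun n y _ => (hasDerivAt_pow n y).const_mul _)
    (fun n y hy => by
      have hyρ : |y| ≤ ρ := by rw [abs_le]; exact ⟨hy.1.le, hy.2.le⟩
      have hb : |y| ^ (n-1) ≤ ρ ^ (n-1) := pow_le_pow_left₀ (abs_nonneg y) hyρ _
      have hcn : |hc (n+1)| ≤ 1 := by
        rw [abs_of_pos (hc_pos (n+1))]; exact hc_le_one (n+1)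
      have hn0 : (0:ℝ) ≤ (n:ℝ) := Nat.cast_nonneg n
      calc ‖((n:ℝ)+1) * hc (n+1) * ((n:ℝ) * y ^ (n-1))‖
          = ((n:ℝ)+1) * |hc (n+1)| * ((n:ℝ) * |y| ^ (n-1)) := by
            rw [Real.norm_eq_abs, abs_mul, abs_mul, abs_mul, abs_pow, Nat.abs_cast,
              abs_of_nonneg (by positivity : (0:ℝ) ≤ (n:ℝ)+1)]
        _ ≤ ((n:ℝ)+1) * 1 * ((n:ℝ) * ρ ^ (n-1)) := by
            refine mul_le_mul (mul_le_mul_of_nonneg_left hcn (by positivity))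
              (mul_le_mul_of_nonneg_left hb hn0) (by positivity) (by positivity)
        _ = ((n:ℝ)+1) * ((n:ℝ) * ρ ^ (n-1)) := by ring)
    (y₀ := 0) (by constructor <;> [linarith; exact hρ0])
    (by
      refine (summable_aux (x := (0:ℝ)) (by norm_num) fun n => ?_)
      have h1 := hc_pos (n+1); have h2 := hc_le_one (n+1)
      have hn0 : (0:ℝ) ≤ (n:ℝ) := Nat.cast_nonneg n
      rw [abs_of_pos (by positivity)]
      nlinarith)
    (y := x) (by rwa [Set.mem_Ioo, ← abs_lt])
  have e : (fun n : ℕ => ((↑(n+1):ℝ)+1) * hc (n+1+1) * ((↑(n+1):ℝ) * x ^ ((n+1)-1)))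
      = fun n : ℕ => ((n:ℝ)+2) * ((n:ℝ)+1) * hc (n+2) * x ^ n := by
    funext n; push_cast [Nat.add_sub_cancel]; ring
  have hshift : HasSum (fun n : ℕ => ((n:ℝ)+1) * hc (n+1) * ((n:ℝ) * x ^ (n-1))) (HH2 x) :=
    hasSum_shift (by simp) (e ▸ hasSum_HH2 hx)
  rw [hshift.tsum_eq] at key
  exact key

end D

lemma HH_ode {x : ℝ} (hx : |x| < 1) :
    x*(1-x)*HH2 x + (1/2 - 2*x)*HH1 x - (2/9)*HH x = 0 := by
  have h0 := hasSum_HH hx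
  have h1 := hasSum_HH1 hx
  have h2 := hasSum_HH2 hx
  have hxH2 : HasSum (fun n : ℕ => ((n:ℝ)+1)*(n:ℝ)*hc (n+1) * x^n) (x * HH2 x) := by
    refine hasSum_shift (by simp) ?_
    have e : (fun n : ℕ => x * (((n:ℝ)+2) * ((n:ℝ)+1) * hc (n+2) * x ^ n))
        = fun n : ℕ => ((↑(n+1):ℝ)+1)*(↑(n+1):ℝ)*hc ((n+1)+1) * x^(n+1) := by
      funext n; push_cast; ring
    exact e ▸ (h2.mul_left x)
  have hx2H2 : HasSum (fun n : ℕ => (n:ℝ)*((n:ℝ)-1)*hc n * x^n) (x^2 * HH2 x) := by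
    refine hasSum_shift (by simp) (hasSum_shift (by norm_num) ?_)
    have e : (fun n : ℕ => x^2 * (((n:ℝ)+2) * ((n:ℝ)+1) * hc (n+2) * x ^ n))
        = fun n : ℕ => (↑(n+1+1):ℝ)*((↑(n+1+1):ℝ)-1)*hc (n+1+1) * x^(n+1+1) := by
      funext n; push_cast; ring
    exact e ▸ (h2.mul_left (x^2))
  have hxH1 : HasSum (fun n : ℕ => (n:ℝ)*hc n * x^n) (x * HH1 x) := by
    refine hasSum_shift (by simp) ?_
    have e : (fun n : ℕ => x * (((n:ℝ)+1) * hc (n+1) * x ^ n))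
        = fun n : ℕ => (↑(n+1):ℝ)*hc (n+1) * x^(n+1) := by
      funext n; push_cast; ring
    exact e ▸ (h1.mul_left x)
  have hbig := (((hxH2.sub hx2H2).add (h1.mul_left (1/2))).sub (hxH1.mul_left 2)).sub
    (h0.mul_left (2/9))
  have hzero : (fun n : ℕ => ((n:ℝ)+1)*(n:ℝ)*hc (n+1) * x^n - (n:ℝ)*((n:ℝ)-1)*hc n * x^n
      + (1/2) * (((n:ℝ)+1) * hc (n+1) * x ^ n) - 2 * ((n:ℝ)*hc n * x^n)
      - (2/9) * (hc n * x ^ n)) = fun _ => (0:ℝ) := by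
    funext n
    have h := hc_rec n
    linear_combination (x^n) * h
  rw [hzero] at hbig
  have : x * HH2 x - x^2 * HH2 x + (1/2) * HH1 x - 2 * (x * HH1 x) - (2/9) * HH x = 0 :=
    hbig.unique hasSum_zero
  linarith [this, sq_nonneg x]

noncomputable def yy (θ : ℝ) : ℝ := Real.cos θ * HH (Real.sin θ ^ 2)
noncomputable def yy1 (θ : ℝ) : ℝ :=
  -Real.sin θ * HH (Real.sin θ ^ 2) + 2 * Real.sin θ * Real.cos θ ^ 2 * HH1 (Real.sin θ ^ 2)

lemma abs_sin_sq_lt {θ : ℝ} (h : sin θ ^ 2 < 1) : |sin θ ^ 2| < 1 := by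
  rwa [abs_of_nonneg (sq_nonneg _)]

lemma hasDerivAt_sin_sq (θ : ℝ) :
    HasDerivAt (fun t => Real.sin t ^ 2) (2 * Real.sin θ * Real.cos θ) θ := by
  have := ((Real.hasDerivAt_sin θ).pow 2)
  refine this.congr_deriv ?_
  ring

lemma hasDerivAt_HH_comp {θ : ℝ} (h : sin θ ^ 2 < 1) :
    HasDerivAt (fun t => HH (Real.sin t ^ 2))
      (HH1 (Real.sin θ ^ 2) * (2 * Real.sin θ * Real.cos θ)) θ :=
  HasDerivAt.comp θ (hasDerivAt_HH (abs_sin_sq_lt h)) (hasDerivAt_sin_sq θ)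

lemma hasDerivAt_HH1_comp {θ : ℝ} (h : sin θ ^ 2 < 1) :
    HasDerivAt (fun t => HH1 (Real.sin t ^ 2))
      (HH2 (Real.sin θ ^ 2) * (2 * Real.sin θ * Real.cos θ)) θ :=
  HasDerivAt.comp θ (hasDerivAt_HH1 (abs_sin_sq_lt h)) (hasDerivAt_sin_sq θ)

lemma hasDerivAt_yy {θ : ℝ} (h : sin θ ^ 2 < 1) : HasDerivAt yy (yy1 θ) θ := by
  have hd := (Real.hasDerivAt_cos θ).mul (hasDerivAt_HH_comp h)
  refine hd.congr_deriv (Eq.symm ?_)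
  unfold yy1
  ring

lemma hasDerivAt_yy1 {θ : ℝ} (h : sin θ ^ 2 < 1) :
    HasDerivAt yy1 (-(1/9) * yy θ) θ := by
  have t1 := ((Real.hasDerivAt_sin θ).neg.mul (hasDerivAt_HH_comp h))
  have hA : HasDerivAt (fun t => 2 * Real.sin t * Real.cos t ^ 2)
      (2 * Real.cos θ * Real.cos θ ^ 2 + 2 * Real.sin θ * (2 * Real.cos θ * -Real.sin θ)) θ := by
    have := ((Real.hasDerivAt_sin θ).const_mul 2).mul ((Real.hasDerivAt_cos θ).pow 2)
    refine this.congr_deriv ?_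
    simp only [Pi.pow_apply]
    ring
  have t2 := hA.mul (hasDerivAt_HH1_comp h)
  have tot := t1.add t2
  refine tot.congr_deriv (Eq.symm ?_)
  have hode := HH_ode (abs_sin_sq_lt h)
  have hpy := Real.sin_sq_add_cos_sq θ
  unfold yy
  simp only [Pi.neg_apply]
  linear_combination (-4 * Real.cos θ) * hode +
    (-(2 * Real.cos θ * HH1 (Real.sin θ ^ 2)
      + 4 * Real.cos θ * Real.sin θ ^ 2 * HH2 (Real.sin θ ^ 2))) * hpy

lemma HH_zero : HH 0 = 1 := by
  unfold HH
  rw [tsum_eq_single 0 (fun b hb => by simp [zero_pow hb])]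
  simp [hc_zero]

lemma lipschitz_v : ∀ t : ℝ, LipschitzWith 1
    (fun p : ℝ × ℝ => (p.2, -(1/9) * p.1)) := by
  intro t
  apply LipschitzWith.of_dist_le_mul
  intro p q
  simp only [Prod.dist_eq, Real.dist_eq, NNReal.coe_one, one_mul]
  have h1 : |(-(1/9) * p.1) - (-(1/9) * q.1)| = (1/9) * |p.1 - q.1| := by
    rw [show (-(1/9) * p.1) - (-(1/9) * q.1) = (-(1/9)) * (p.1 - q.1) by ring, abs_mul]
    norm_num
  apply max_le
  · exact le_trans (le_max_right _ _) le_rfl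
  · rw [h1]
    refine le_trans ?_ (le_max_left _ _)
    nlinarith [abs_nonneg (p.1 - q.1)]

lemma cubic_HH {x : ℝ} (hx0 : 0 ≤ x) (hx1 : x < 1) :
    4 * (1 - x) * (HH x)^3 = 3 * HH x + 1 := by
  have hsx0 : 0 ≤ Real.sqrt x := Real.sqrt_nonneg x
  have hsx1 : Real.sqrt x < 1 := by
    rw [show (1:ℝ) = Real.sqrt 1 by simp]
    exact Real.sqrt_lt_sqrt hx0 hx1
  set θ₀ := Real.arcsin (Real.sqrt x) with hθ₀def
  have hθ₀0 : 0 ≤ θ₀ := Real.arcsin_nonneg.mpr hsx0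
  have hθ₀lt : θ₀ < π/2 := Real.arcsin_lt_pi_div_two.mpr hsx1
  have hsinθ₀ : Real.sin θ₀ = Real.sqrt x := Real.sin_arcsin (by linarith) hsx1.le
  have hsin2θ₀ : Real.sin θ₀ ^ 2 = x := by rw [hsinθ₀, Real.sq_sqrt hx0]
  -- for θ in Icc 0 θ₀, sin θ ^ 2 ≤ x < 1
  have hmem : ∀ θ ∈ Set.Icc (0:ℝ) θ₀, Real.sin θ ^ 2 < 1 := by
    intro θ hθ
    have h1 : Real.sin θ ≤ Real.sin θ₀ := by
      apply Real.strictMonoOn_sin.monotoneOn ?_ ?_ hθ.2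
      · constructor <;> [linarith [hθ.1, Real.pi_div_two_pos.le]; linarith [hθ.2, hθ₀lt]]
      · constructor <;> [linarith [Real.pi_div_two_pos.le]; linarith]
    have h0 : 0 ≤ Real.sin θ := Real.sin_nonneg_of_nonneg_of_le_pi hθ.1
      (by nlinarith [hθ.2, hθ₀lt, Real.pi_pos])
    have : Real.sin θ ^ 2 ≤ Real.sin θ₀ ^ 2 := by nlinarith
    calc Real.sin θ ^ 2 ≤ x := by rw [← hsin2θ₀]; exact this
      _ < 1 := hx1
  -- ODE uniqueness
  have hEq : Set.EqOn (fun t => (yy t, yy1 t))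
      (fun t => (Real.cos (t/3), -(1/3) * Real.sin (t/3))) (Set.Icc 0 θ₀) := by
    apply ODE_solution_unique (v := fun _ p => (p.2, -(1/9) * p.1)) lipschitz_v
    · intro θ hθ
      exact (HasDerivAt.prodMk (hasDerivAt_yy (hmem θ hθ)) (hasDerivAt_yy1 (hmem θ hθ))).continuousAt.continuousWithinAt
    · intro θ hθ
      exact ((HasDerivAt.prodMk (hasDerivAt_yy (hmem θ (Set.mem_Icc_of_Ico hθ)))
        (hasDerivAt_yy1 (hmem θ (Set.mem_Icc_of_Ico hθ))))).hasDerivWithinAt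
    · intro θ _
      exact (Continuous.continuousWithinAt (by continuity))
    · intro θ _
      have hd3 : HasDerivAt (fun t : ℝ => t/3) (1/3) θ := by
        simpa using (hasDerivAt_id θ).div_const 3
      have hgc : HasDerivAt (fun t => Real.cos (t/3)) (-(1/3) * Real.sin (θ/3)) θ := by
        have := (Real.hasDerivAt_cos (θ/3)).comp θ hd3
        refine this.congr_deriv ?_; ring
      have hgs : HasDerivAt (fun t => -(1/3) * Real.sin (t/3)) (-(1/9) * Real.cos (θ/3)) θ := by
        have := ((Real.hasDerivAt_sin (θ/3)).comp θ hd3).const_mul (-(1/3))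
        refine this.congr_deriv ?_; ring
      exact (HasDerivAt.prodMk hgc hgs).hasDerivWithinAt
    · simp [yy, yy1, HH_zero]
  have h0mem : θ₀ ∈ Set.Icc (0:ℝ) θ₀ := Set.right_mem_Icc.mpr hθ₀0
  have hval := hEq h0mem
  have hy : Real.cos θ₀ * HH x = Real.cos (θ₀/3) := by
    have := congrArg Prod.fst hval
    simpa [yy, hsin2θ₀] using this
  have hC0 : 0 < Real.cos θ₀ := Real.cos_pos_of_mem_Ioo ⟨by linarith [Real.pi_div_two_pos], hθ₀lt⟩
  have hC2 : Real.cos θ₀ ^ 2 = 1 - x := by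
    rw [Real.cos_sq', hsin2θ₀]
  have h3 : Real.cos θ₀ = 4 * (Real.cos θ₀ * HH x)^3 - 3 * (Real.cos θ₀ * HH x) := by
    rw [hy, ← Real.cos_three_mul]
    norm_num [mul_div_cancel₀]
  have key : Real.cos θ₀ * (4 * (1-x) * (HH x)^3 - 3 * HH x - 1) = 0 := by
    linear_combination (-1 : ℝ) * h3 + (-(4 * Real.cos θ₀ * (HH x)^3)) * hC2
  rcases mul_eq_zero.mp key with h | h
  · exact absurd h (ne_of_gt hC0)
  · linarith

lemma hyperF_eq_HH (x : ℝ) : hyperF (1/3) (2/3) (1/2) x = HH x := rfl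

theorem stmt_2 (κ lam : ℝ) (hκ : κ ∈ Set.Ioo (0 : ℝ) 1) (hlam : lam ^ 2 = 1 - κ ^ 2)
    (φ : ℝ → ℝ) (hφ : Differentiable ℝ φ) (hφ' : Differentiable ℝ (deriv φ))
    (hφ0 : φ 0 = 0)
    (hinv : ∀ u : ℝ, deriv φ u * hyperF (1/3) (2/3) (1/2) (κ ^ 2 * sin (φ u) ^ 2) = 1) :
    ∀ u : ℝ, (deriv (deriv φ) u) ^ 2 =
      (4/9) * (1 - deriv φ u) * ((deriv φ u) ^ 3 + 3 * (deriv φ u) ^ 2 - 4 * lam ^ 2) := by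
  obtain ⟨hκ0, hκ1⟩ := hκ
  have hinv' : ∀ w : ℝ, deriv φ w * HH (κ ^ 2 * sin (φ w) ^ 2) = 1 := by
    intro w; rw [← hyperF_eq_HH]; exact hinv w
  have hx0 : ∀ w : ℝ, 0 ≤ κ ^ 2 * sin (φ w) ^ 2 := fun w => by positivity
  have hx1 : ∀ w : ℝ, κ ^ 2 * sin (φ w) ^ 2 < 1 := by
    intro w
    nlinarith [Real.sin_sq_le_one (φ w), sq_nonneg (Real.sin (φ w)), sq_nonneg κ]
  have hdne : ∀ w : ℝ, deriv φ w ≠ 0 := by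
    intro w h
    have := hinv' w
    rw [h] at this; norm_num at this
  have E1 : ∀ w : ℝ, (deriv φ w)^3 + 3*(deriv φ w)^2 = 4 - 4*κ^2* sin (φ w)^2 := by
    intro w
    have hiw := hinv' w
    have hcub := cubic_HH (hx0 w) (hx1 w)
    have hd0 := hdne w
    have hHval : HH (κ ^ 2 * sin (φ w) ^ 2) = 1 / deriv φ w := by
      rw [eq_div_iff hd0, mul_comm]; exact hiw
    rw [hHval] at hcub
    field_simp at hcub
    have hkey : deriv φ w * ((deriv φ w)^3 + 3*(deriv φ w)^2
        - (4 - 4*κ^2* sin (φ w)^2)) = 0 := by linear_combination (-deriv φ w) * hcub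
    rcases mul_eq_zero.mp hkey with h | h
    · exact absurd h hd0
    · linarith
  intro u
  -- differentiate E1
  have hdd : HasDerivAt (deriv φ) (deriv (deriv φ) u) u := (hφ' u).hasDerivAt
  have hφd : HasDerivAt φ (deriv φ u) u := (hφ u).hasDerivAt
  have hFd : HasDerivAt
      (fun w => (deriv φ w)^3 + 3*(deriv φ w)^2 + 4*κ^2* sin (φ w)^2 - 4)
      (3*(deriv φ u)^2*(deriv (deriv φ) u) + 6*(deriv φ u)*(deriv (deriv φ) u)
        + 8*κ^2* sin (φ u) * cos (φ u) * deriv φ u) u := by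
    have t1 := hdd.pow 3
    have t2 := (hdd.pow 2).const_mul (3:ℝ)
    have t3 := (((Real.hasDerivAt_sin (φ u)).comp u hφd).pow 2).const_mul (4*κ^2)
    have := ((t1.add t2).add t3).sub_const 4
    refine this.congr_deriv (Eq.symm ?_)
    simp only [Function.comp_apply]
    push_cast
    ring
  have hFzero : (fun w => (deriv φ w)^3 + 3*(deriv φ w)^2 + 4*κ^2* sin (φ w)^2 - 4)
      = fun _ : ℝ => (0:ℝ) := by
    funext w
    have := E1 w
    linarith
  have E2 : 3*(deriv φ u)^2*(deriv (deriv φ) u) + 6*(deriv φ u)*(deriv (deriv φ) u)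
      + 8*κ^2* sin (φ u) * cos (φ u) * deriv φ u = 0 := by
    have h0 : HasDerivAt (fun _ : ℝ => (0:ℝ)) 0 u := hasDerivAt_const u 0
    exact (hFzero ▸ hFd).unique h0
  set D := deriv φ u with hD
  set D' := deriv (deriv φ) u with hD'
  set s := Real.sin (φ u) with hs
  set c := Real.cos (φ u) with hc'
  have pyth : s^2 + c^2 = 1 := Real.sin_sq_add_cos_sq (φ u)
  have E1u : D^3 + 3*D^2 = 4 - 4*κ^2*s^2 := E1 u
  have E3 : 3*(D+2)*D' = -8*κ^2*s*c := by
    have hd0 := hdne u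
    have : D * (3*(D+2)*D' + 8*κ^2*s*c) = 0 := by linear_combination E2
    rcases mul_eq_zero.mp this with h | h
    · exact absurd h hd0
    · linarith
  by_cases hD2 : D + 2 = 0
  · -- then s = 0 and D = 1, contradiction
    exfalso
    have hDm2 : D = -2 := by linarith
    have hκ2 : (0:ℝ) < κ^2 := by positivity
    have hs0 : s ^ 2 = 0 := by
      rw [hDm2] at E1u
      norm_num at E1u
      nlinarith [sq_nonneg s]
    have hx : κ ^ 2 * Real.sin (φ u) ^ 2 = 0 := by rw [← hs, hs0, mul_zero]
    have := hinv' u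
    rw [hx, HH_zero] at this
    rw [← hD] at this
    simp at this
    rw [this] at hDm2
    norm_num at hDm2
  · have h4 : 4*κ^2*s^2 = (1-D)*(D+2)^2 := by linear_combination E1u
    have hsq : (3*(D+2)*D')^2 = 64*κ^4*s^2*c^2 := by rw [E3]; ring
    have expand : ((4:ℝ)/9)*(1-D)*(D^3+3*D^2-4*lam^2) = (16/9)*κ^2*c^2*(1-D) := by
      linear_combination ((4:ℝ)/9*(1-D)) * E1u - (16/9)*(1-D) * hlam
        - (16/9)*κ^2*(1-D) * pyth
    have h9 : D'^2 * (9*(D+2)^2) = ((4/9)*(1-D)*(D^3+3*D^2-4*lam^2)) * (9*(D+2)^2) := by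
      rw [expand]
      linear_combination hsq + (16*κ^2*c^2) * h4
    have hne : (9:ℝ)*(D+2)^2 ≠ 0 := by
      intro h
      apply hD2
      have : (D+2)^2 = 0 := by linarith
      exact pow_eq_zero_iff (by norm_num) |>.mp this
    exact mul_right_cancel₀ hne h9
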